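/- For each i ∈ {1,…,2m} and j ∈ {1,…,n}, the sets g↑ ∩ B_ij and g↑ ∩ L_ij are convex (each is a line segment on the corresponding side of the cell, possibly empty). -/

import Mathlib

open Set

noncomputable section

/-- The piecewise linear closed curve through the vertices `x 0, x 1, …`:
`f(i+α) = (1-α) • x i + α • x (i+1)`. -/
def fCurve {k : ℕ} (x : ℕ → EuclideanSpace ℝ (Fin k)) (t : ℝ) :
    EuclideanSpace ℝ (Fin k) :=
  (1 - Int.fract t) • x (⌊t⌋.toNat) + Int.fract t • x (⌊t⌋.toNat + 1)

/-- The extension of the curve from `[0,m]` to `[0,2m]` by `f(u) = f(u-m)` for `u > m`. -/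
def fCurveExt {k : ℕ} (m : ℕ) (x : ℕ → EuclideanSpace ℝ (Fin k)) (u : ℝ) :
    EuclideanSpace ℝ (Fin k) :=
  if u ≤ m then fCurve x u else fCurve x (u - m)

/-- The rectangle `D = [0,2m] × [0,n]`. -/
def Dfull (m n : ℕ) : Set (ℝ × ℝ) :=
  Icc (0:ℝ) (2*(m:ℝ)) ×ˢ Icc (0:ℝ) (n:ℝ)

/-- The free space `D_ε = {(u,v) ∈ D : dist (f_X u) (f_Y v) ≤ ε}`. -/
def Dfree {k : ℕ} (m n : ℕ) (x y : ℕ → EuclideanSpace ℝ (Fin k)) (ε : ℝ) :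
    Set (ℝ × ℝ) :=
  {p ∈ Dfull m n | dist (fCurveExt m x p.1) (fCurve y p.2) ≤ ε}

/-- The top side `T = [0,2m] × {n}` of `D`. -/
def Tside (m n : ℕ) : Set (ℝ × ℝ) := Icc (0:ℝ) (2*(m:ℝ)) ×ˢ {(n:ℝ)}

/-- The bottom side `B = [0,2m] × {0}` of `D`. -/
def Bside (m : ℕ) : Set (ℝ × ℝ) := Icc (0:ℝ) (2*(m:ℝ)) ×ˢ {(0:ℝ)}

/-- A monotone (non-decreasing) path: a connected subset `γ ⊆ Dε` with
`(u-u')·(v-v') ≥ 0` for all `(u,v), (u',v') ∈ γ`. -/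
def IsMonPath (Dε γ : Set (ℝ × ℝ)) : Prop :=
  γ ⊆ Dε ∧ IsConnected γ ∧
    ∀ p ∈ γ, ∀ q ∈ γ, (p.1 - q.1) * (p.2 - q.2) ≥ 0

/-- Two points are mutually reachable if some monotone path contains both. -/
def Reach (Dε : Set (ℝ × ℝ)) (p q : ℝ × ℝ) : Prop :=
  ∃ γ : Set (ℝ × ℝ), IsMonPath Dε γ ∧ p ∈ γ ∧ q ∈ γ

/-- `g↓`: the points of `Dε` mutually reachable with at least one point of `B`. -/
def gDown (m : ℕ) (Dε : Set (ℝ × ℝ)) : Set (ℝ × ℝ) :=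
  {p ∈ Dε | ∃ q ∈ Bside m, Reach Dε p q}

/-- `g↑`: the points of `Dε` mutually reachable with at least one point of `T`. -/
def gUp (m n : ℕ) (Dε : Set (ℝ × ℝ)) : Set (ℝ × ℝ) :=
  {p ∈ Dε | ∃ q ∈ Tside m n, Reach Dε p q}

/-- The pointer `r↑(p)`: the maximum `u* ∈ [0,2m]` such that `p` and `(u*, n)`
are mutually reachable. -/
def rUp (m n : ℕ) (Dε : Set (ℝ × ℝ)) (p : ℝ × ℝ) : ℝ :=
  sSup {u : ℝ | u ∈ Icc (0:ℝ) (2*(m:ℝ)) ∧ Reach Dε p (u, (n:ℝ))}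

/-- The pointer `r↓(p)`: for `p` with `p.2 > 0`, the maximum `u* ∈ [0,2m]` such
that `p` and `(u*, 0)` are mutually reachable; on the bottom side `r↓(u,0) = u`. -/
def rDown (m : ℕ) (Dε : Set (ℝ × ℝ)) (p : ℝ × ℝ) : ℝ :=
  if p.2 = 0 then p.1
  else sSup {u : ℝ | u ∈ Icc (0:ℝ) (2*(m:ℝ)) ∧ Reach Dε p (u, (0:ℝ))}

/-- The cell `D_ij = [i-1,i] × [j-1,j]`. -/
def cellD (i j : ℕ) : Set (ℝ × ℝ) :=
  Icc ((i:ℝ)-1) (i:ℝ) ×ˢ Icc ((j:ℝ)-1) (j:ℝ)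

/-- The top side `T_ij` of the cell `D_ij`. -/
def cellT (i j : ℕ) : Set (ℝ × ℝ) := Icc ((i:ℝ)-1) (i:ℝ) ×ˢ {(j:ℝ)}

/-- The bottom side `B_ij` of the cell `D_ij`. -/
def cellB (i j : ℕ) : Set (ℝ × ℝ) := Icc ((i:ℝ)-1) (i:ℝ) ×ˢ {((j:ℝ)-1)}

/-- The right side `R_ij` of the cell `D_ij`. -/
def cellR (i j : ℕ) : Set (ℝ × ℝ) := {(i:ℝ)} ×ˢ Icc ((j:ℝ)-1) (j:ℝ)

/-- The left side `L_ij` of the cell `D_ij`. -/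
def cellL (i j : ℕ) : Set (ℝ × ℝ) := {((i:ℝ)-1)} ×ˢ Icc ((j:ℝ)-1) (j:ℝ)

/-- The partial order `≼` on `D`: `(u1,v1) ≼ (u2,v2)` iff `u1 ≤ u2` and `v1 ≥ v2`. -/
def prec (p q : ℝ × ℝ) : Prop := p.1 ≤ q.1 ∧ q.2 ≤ p.2

/-! Within a cell `D_ij` both curves are affine, so `(u, v) ↦ f_X u - f_Y v` agrees with an affine
map and the free space of the cell is the preimage of a closed ball: it is convex. The sides
`B_ij` and `L_ij` are chains for the product order, and `g↑` is closed downwards along free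
segments: if `q ≤ r`, `[q, r] ⊆ D_ε` and a monotone path `γ` joins `r` to `t ∈ T`, then
`(r ⊔ ·) '' γ ∪ [q, r]` is a monotone path joining `q` to `r ⊔ t ∈ T`. Hence for two points of
`g↑` on a side, every point between them lies below the larger one on a free segment. -/

section FreeSpace

variable {k : ℕ}

lemma fCurve_natCast (x : ℕ → EuclideanSpace ℝ (Fin k)) (l : ℕ) : fCurve x l = x l := by
  simp [fCurve]

lemma fCurve_eq_lineMap (x : ℕ → EuclideanSpace ℝ (Fin k)) (l : ℕ) {u : ℝ}
    (hu : u ∈ Icc (l : ℝ) (l + 1)) :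
    fCurve x u = AffineMap.lineMap (x l) (x (l + 1)) (u - l) := by
  rw [AffineMap.lineMap_apply_module]
  rcases hu.2.eq_or_lt with rfl | hlt
  · rw [show (l : ℝ) + 1 = ((l + 1 : ℕ) : ℝ) by push_cast; ring, fCurve_natCast]
    simp
  · have hfloor : ⌊u⌋ = l := Int.floor_eq_iff.2 ⟨by exact_mod_cast hu.1, by push_cast; linarith⟩
    have hfract : Int.fract u = u - l := by rw [Int.fract, hfloor]; push_cast; ring
    simp [fCurve, hfract, hfloor]

lemma fCurveExt_eq_fCurve_sub {m : ℕ} {x : ℕ → EuclideanSpace ℝ (Fin k)} (hx : x m = x 0)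
    {u : ℝ} (hu : (m : ℝ) ≤ u) : fCurveExt m x u = fCurve x (u - m) := by
  rcases hu.eq_or_lt with rfl | hlt
  · rw [fCurveExt, if_pos le_rfl, sub_self, ← Nat.cast_zero, fCurve_natCast, fCurve_natCast, hx]
  · simp [fCurveExt, hlt.not_ge]

lemma exists_affineMap_eqOn_fCurve (x : ℕ → EuclideanSpace ℝ (Fin k)) (l : ℕ) :
    ∃ φ : ℝ →ᵃ[ℝ] EuclideanSpace ℝ (Fin k), EqOn (fCurve x) φ (Icc (l : ℝ) (l + 1)) :=
  ⟨(AffineMap.lineMap (x l) (x (l + 1))).comp (AffineMap.id ℝ ℝ - AffineMap.const ℝ ℝ (l : ℝ)),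
    fun u hu => by simp [fCurve_eq_lineMap x l hu]⟩

lemma exists_affineMap_eqOn_fCurveExt {m : ℕ} {x : ℕ → EuclideanSpace ℝ (Fin k)}
    (hx : x m = x 0) (i : ℕ) :
    ∃ φ : ℝ →ᵃ[ℝ] EuclideanSpace ℝ (Fin k), EqOn (fCurveExt m x) φ (Icc (i : ℝ) (i + 1)) := by
  rcases lt_or_ge i m with him | hmi
  · obtain ⟨φ, hφ⟩ := exists_affineMap_eqOn_fCurve x i
    refine ⟨φ, fun u hu => ?_⟩
    rw [fCurveExt, if_pos (hu.2.trans (by exact_mod_cast him)), hφ hu]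
  · obtain ⟨φ, hφ⟩ := exists_affineMap_eqOn_fCurve x (i - m)
    have hcast : ((i - m : ℕ) : ℝ) = i - m := Nat.cast_sub hmi
    refine ⟨φ.comp (AffineMap.id ℝ ℝ - AffineMap.const ℝ ℝ (m : ℝ)), fun u hu => ?_⟩
    rw [fCurveExt_eq_fCurve_sub hx ((Nat.cast_le.2 hmi).trans hu.1),
      hφ (by rw [hcast]; constructor <;> linarith [hu.1, hu.2])]
    simp

lemma convex_Dfull (m n : ℕ) : Convex ℝ (Dfull m n) :=
  (convex_Icc _ _).prod (convex_Icc _ _)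

lemma convex_cellD (i j : ℕ) : Convex ℝ (cellD i j) :=
  (convex_Icc _ _).prod (convex_Icc _ _)

lemma convex_Dfree_inter_cellD {m n : ℕ} {x : ℕ → EuclideanSpace ℝ (Fin k)}
    (y : ℕ → EuclideanSpace ℝ (Fin k)) (ε : ℝ) (hx : x m = x 0) {i j : ℕ} (hi : 1 ≤ i)
    (hj : 1 ≤ j) : Convex ℝ (Dfree m n x y ε ∩ cellD i j) := by
  obtain ⟨i, rfl⟩ := Nat.exists_eq_add_of_le' hi
  obtain ⟨j, rfl⟩ := Nat.exists_eq_add_of_le' hj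
  obtain ⟨φX, hX⟩ := exists_affineMap_eqOn_fCurveExt hx i
  obtain ⟨φY, hY⟩ := exists_affineMap_eqOn_fCurve y j
  let Φ : ℝ × ℝ →ᵃ[ℝ] EuclideanSpace ℝ (Fin k) :=
    φX.comp (LinearMap.fst ℝ ℝ ℝ).toAffineMap - φY.comp (LinearMap.snd ℝ ℝ ℝ).toAffineMap
  have hΦ : EqOn (fun p : ℝ × ℝ => fCurveExt m x p.1 - fCurve y p.2) Φ
      (cellD (i + 1) (j + 1)) := by
    rintro p ⟨hp1, hp2⟩
    simp only [Nat.cast_add, Nat.cast_one, add_sub_cancel_right] at hp1 hp2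
    simp [Φ, hX hp1, hY hp2]
  have hfree : Dfree m n x y ε ∩ cellD (i + 1) (j + 1) = Dfull m n ∩
      (cellD (i + 1) (j + 1) ∩ (fun p : ℝ × ℝ => fCurveExt m x p.1 - fCurve y p.2) ⁻¹'
        Metric.closedBall 0 ε) := by
    ext p
    simp [Dfree, dist_eq_norm, and_comm, and_left_comm]
  rw [hfree, hΦ.inter_preimage_eq]
  exact (convex_Dfull m n).inter ((convex_cellD _ _).inter
    ((convex_closedBall 0 ε).affine_preimage Φ))

end FreeSpace

lemma sub_mul_sub_nonneg_iff_le_or_le {p q : ℝ × ℝ} :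
    0 ≤ (p.1 - q.1) * (p.2 - q.2) ↔ p ≤ q ∨ q ≤ p := by
  simp only [mul_nonneg_iff, sub_nonneg, sub_nonpos, Prod.le_def]
  exact or_comm

lemma isMonPath_iff_isChain {Dε γ : Set (ℝ × ℝ)} :
    IsMonPath Dε γ ↔ γ ⊆ Dε ∧ IsConnected γ ∧ IsChain (· ≤ ·) γ := by
  simp only [IsMonPath, ge_iff_le, sub_mul_sub_nonneg_iff_le_or_le]
  refine and_congr_right' (and_congr_right'
    ⟨fun h p hp q hq _ => h p hp q hq, fun h p hp q hq => ?_⟩)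
  rcases eq_or_ne p q with rfl | hpq
  · exact Or.inl le_rfl
  · exact h hp hq hpq

lemma isChain_segment {q r : ℝ × ℝ} (h : q ≤ r) : IsChain (· ≤ ·) (segment ℝ q r) := by
  rw [segment_eq_image_lineMap]
  exact (AffineMap.lineMap_mono h).isChain_image (isChain_of_trichotomous _)

lemma reach_sup_of_le {Dε : Set (ℝ × ℝ)} {q r t : ℝ × ℝ} (hqr : q ≤ r)
    (hseg : segment ℝ q r ⊆ Dε) (hrt : Reach Dε r t) : Reach Dε q (r ⊔ t) := by
  obtain ⟨γ, hγ, hr, ht⟩ := hrt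
  obtain ⟨hγD, hγc, hγ⟩ := isMonPath_iff_isChain.1 hγ
  -- every point of the chain `γ` is comparable with `r`, so `r ⊔ s` is `s` or `r`
  have himg : (r ⊔ ·) '' γ ⊆ γ := by
    rintro _ ⟨s, hs, rfl⟩
    rcases hγ.total hr hs with h | h
    · rwa [← sup_eq_right.2 h] at hs
    · rwa [← sup_eq_left.2 h] at hr
  have himg_ge : (r ⊔ ·) '' γ ⊆ Ici r := image_subset_iff.2 fun _ _ => (le_sup_left : r ≤ _)
  have hseg_le : segment ℝ q r ⊆ Iic r := (segment_subset_Icc hqr).trans Icc_subset_Iic_self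
  have hcont : Continuous (r ⊔ · : ℝ × ℝ → ℝ × ℝ) :=
    (continuous_const.max continuous_fst).prodMk (continuous_const.max continuous_snd)
  refine ⟨(r ⊔ ·) '' γ ∪ segment ℝ q r, isMonPath_iff_isChain.2 ⟨?_, ?_, ?_⟩,
    Or.inr (left_mem_segment ℝ q r), Or.inl ⟨t, ht, rfl⟩⟩
  · exact union_subset (himg.trans hγD) hseg
  · exact ⟨⟨q, Or.inr (left_mem_segment ℝ q r)⟩,
      (hγc.isPreconnected.image _ hcont.continuousOn).union r ⟨r, hr, sup_idem r⟩
        (right_mem_segment ℝ q r) (convex_segment q r).isPreconnected⟩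
  · exact isChain_union.2 ⟨hγ.mono himg, isChain_segment hqr,
      fun a ha b hb _ => Or.inr ((hseg_le hb).trans (himg_ge ha))⟩

lemma mem_gUp_of_le {m n : ℕ} {Dε : Set (ℝ × ℝ)} (hsub : Dε ⊆ Dfull m n) {q r : ℝ × ℝ}
    (hqr : q ≤ r) (hseg : segment ℝ q r ⊆ Dε) (hr : r ∈ gUp m n Dε) : q ∈ gUp m n Dε := by
  obtain ⟨hrD, t, ⟨ht1, ht2⟩, hrt⟩ := hr
  refine ⟨hseg (left_mem_segment ℝ q r), r ⊔ t, ⟨?_, ?_⟩, reach_sup_of_le hqr hseg hrt⟩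
  · exact ⟨le_sup_of_le_right ht1.1, sup_le (hsub hrD).1.2 ht1.2⟩
  · change r.2 ⊔ t.2 = n
    rw [mem_singleton_iff.1 ht2]
    exact sup_eq_right.2 (hsub hrD).2.2

lemma convex_gUp_inter {m n : ℕ} {Dε S : Set (ℝ × ℝ)} (hsub : Dε ⊆ Dfull m n)
    (hS : IsChain (· ≤ ·) S) (hfree : Convex ℝ (Dε ∩ S)) : Convex ℝ (gUp m n Dε ∩ S) := by
  rw [convex_iff_segment_subset]
  intro p hp r hr
  have hpr : segment ℝ p r ⊆ Dε ∩ S := hfree.segment_subset ⟨hp.1.1, hp.2⟩ ⟨hr.1.1, hr.2⟩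
  wlog hle : p ≤ r generalizing p r
  · rw [segment_symm] at hpr ⊢
    exact this hr hp hpr ((hS.total hp.2 hr.2).resolve_left hle)
  intro w hw
  have hwr : segment ℝ w r ⊆ Dε :=
    ((convex_segment p r).segment_subset hw (right_mem_segment ℝ p r)).trans
      (hpr.trans inter_subset_left)
  exact ⟨mem_gUp_of_le hsub (segment_subset_Icc hle hw).2 hwr hr.1, (hpr hw).2⟩

section CellSides

variable (i j : ℕ)

lemma isChain_cellB : IsChain (· ≤ ·) (cellB i j) := by
  rintro p ⟨-, hp⟩ q ⟨-, hq⟩ -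
  rw [mem_singleton_iff] at hp hq
  rcases le_total p.1 q.1 with h | h
  · exact Or.inl ⟨h, (hp.trans hq.symm).le⟩
  · exact Or.inr ⟨h, (hq.trans hp.symm).le⟩

lemma isChain_cellL : IsChain (· ≤ ·) (cellL i j) := by
  rintro p ⟨hp, -⟩ q ⟨hq, -⟩ -
  rw [mem_singleton_iff] at hp hq
  rcases le_total p.2 q.2 with h | h
  · exact Or.inl ⟨(hp.trans hq.symm).le, h⟩
  · exact Or.inr ⟨(hq.trans hp.symm).le, h⟩

lemma cellB_subset_cellD : cellB i j ⊆ cellD i j :=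
  prod_mono le_rfl (singleton_subset_iff.2 ⟨le_rfl, by linarith⟩)

lemma cellL_subset_cellD : cellL i j ⊆ cellD i j :=
  prod_mono (singleton_subset_iff.2 ⟨le_rfl, by linarith⟩) le_rfl

lemma convex_cellB : Convex ℝ (cellB i j) := (convex_Icc _ _).prod (convex_singleton _)

lemma convex_cellL : Convex ℝ (cellL i j) := (convex_singleton _).prod (convex_Icc _ _)

end CellSides

theorem stmt10_general
    (k m n : ℕ)
    (x y : ℕ → EuclideanSpace ℝ (Fin k)) (hx : x m = x 0)
    (ε : ℝ)
    (Dε : Set (ℝ × ℝ)) (hDε : Dε = Dfree m n x y ε)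
    (i j : ℕ) (hi1 : 1 ≤ i) (hj1 : 1 ≤ j) :
    Convex ℝ (gUp m n Dε ∩ cellB i j) ∧ Convex ℝ (gUp m n Dε ∩ cellL i j) := by
  subst hDε
  have hsub : Dfree m n x y ε ⊆ Dfull m n := fun _ hp => hp.1
  have hcell := convex_Dfree_inter_cellD (n := n) y ε hx hi1 hj1
  constructor
  · refine convex_gUp_inter hsub (isChain_cellB i j) ?_
    rw [← inter_eq_right.2 (cellB_subset_cellD i j), ← inter_assoc]
    exact hcell.inter (convex_cellB i j)
  · refine convex_gUp_inter hsub (isChain_cellL i j) ?_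
    rw [← inter_eq_right.2 (cellL_subset_cellD i j), ← inter_assoc]
    exact hcell.inter (convex_cellL i j)

theorem stmt10
    (k m n : ℕ) (hk : 1 ≤ k) (hm : 1 ≤ m) (hn : 1 ≤ n)
    (x y : ℕ → EuclideanSpace ℝ (Fin k)) (hx : x m = x 0) (hy : y n = y 0)
    (ε : ℝ) (hε : 0 ≤ ε)
    (Dε : Set (ℝ × ℝ)) (hDε : Dε = Dfree m n x y ε)
    (i j : ℕ) (hi1 : 1 ≤ i) (hi2 : i ≤ 2*m) (hj1 : 1 ≤ j) (hj2 : j ≤ n) :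
    Convex ℝ (gUp m n Dε ∩ cellB i j) ∧ Convex ℝ (gUp m n Dε ∩ cellL i j) :=
  stmt10_general k m n x y hx ε Dε hDε i j hi1 hj1
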